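/- Let a < b and let f : [a, b] → ℝ be continuous and strictly increasing. For each n ≥ 1, with x_l^{(n)} = a + l(b−a)/n, y_l^{(n)} = f(x_l^{(n)}), Δy_l^{(n)} = y_l^{(n)} − y_{l−1}^{(n)} for l = 1, …, n and Δy_0^{(n)} = y_1^{(n)} − y_0^{(n)}, hat functions A_l^{(n)}, and base functions φ_l^{(n)}(x) = A_l^{(n)}(x)·Δy_l^{(n)} / Σ_{j=0}^{n} A_j^{(n)}(x)·Δy_j^{(n)}, the interpolation functions f_n(x) = Σ_{l=0}^{n} φ_l^{(n)}(x)·y_l^{(n)} converge uniformly to f on [a, b]: for every ε > 0 there exists N such that for all n > N and all x ∈ [a, b], |f_n(x) − f(x)| < ε. -/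

import Mathlib

/-!
At a point `x`, the only hat functions that do not vanish are those of nodes at distance less
than the mesh `(b - a) / n` from `x`, and at least one of them is positive. Since the increments
`Δy_l` are positive, `f_n(x)` is therefore a weighted average, with nonnegative weights of positive
total, of values `f(x_l)` at nodes closer to `x` than the mesh. By uniform continuity of `f` on
`[a, b]` all these values are within `ε` of `f(x)` once the mesh is small enough.
-/

/-- The equidistant node `x_l^{(n)} = a + l (b-a)/n` of `[a, b]`. -/
noncomputable def nodes (a b : ℝ) (n l : ℕ) : ℝ := a + (l : ℝ) * (b - a) / (n : ℝ)

/-- The triangular hat function `A_l^{(n)}(x) = max (0, 1 - (n/(b-a)) |x - x_l^{(n)}|)`. -/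
noncomputable def hatA (a b : ℝ) (n l : ℕ) (x : ℝ) : ℝ :=
  max 0 (1 - ((n : ℝ) / (b - a)) * |x - nodes a b n l|)

/-- The increment `Δy_l^{(n)} = y_l^{(n)} − y_{l−1}^{(n)}` (`l ≥ 1`), with the convention
`Δy_0^{(n)} = Δy_1^{(n)} = y_1^{(n)} − y_0^{(n)}`, where `y_l^{(n)} = f (x_l^{(n)})`. -/
noncomputable def dy (a b : ℝ) (f : ℝ → ℝ) (n l : ℕ) : ℝ :=
  if l = 0 then f (nodes a b n 1) - f (nodes a b n 0)
  else f (nodes a b n l) - f (nodes a b n (l - 1))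

/-- The base function `φ_l^{(n)}(x) = A_l^{(n)}(x) Δy_l^{(n)} / Σ_j A_j^{(n)}(x) Δy_j^{(n)}`. -/
noncomputable def phi (a b : ℝ) (f : ℝ → ℝ) (n l : ℕ) (x : ℝ) : ℝ :=
  hatA a b n l x * dy a b f n l /
    ∑ j ∈ Finset.range (n + 1), hatA a b n j x * dy a b f n j

/-- The interpolation function `f_n(x) = Σ_l φ_l^{(n)}(x) y_l^{(n)}`. -/
noncomputable def interp (a b : ℝ) (f : ℝ → ℝ) (n : ℕ) (x : ℝ) : ℝ :=
  ∑ l ∈ Finset.range (n + 1), phi a b f n l x * f (nodes a b n l)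

open Finset

lemma abs_sum_mul_div_sum_sub_lt {ι : Type*} (s : Finset ι) (w g : ι → ℝ) {c ε : ℝ}
    (hw : ∀ i ∈ s, 0 ≤ w i) (hpos : ∃ i ∈ s, 0 < w i)
    (hg : ∀ i ∈ s, 0 < w i → |g i - c| < ε) :
    |(∑ i ∈ s, w i * g i) / ∑ i ∈ s, w i - c| < ε := by
  have hW : 0 < ∑ i ∈ s, w i := sum_pos' hw hpos
  have hterm : ∀ i ∈ s, w i * |g i - c| ≤ w i * ε := fun i hi =>
    (hw i hi).eq_or_lt.elim (fun h => by simp [← h])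
      (fun h => mul_le_mul_of_nonneg_left (hg i hi h).le h.le)
  have hterm_lt : ∃ i ∈ s, w i * |g i - c| < w i * ε := by
    obtain ⟨i, hi, h⟩ := hpos
    exact ⟨i, hi, mul_lt_mul_of_pos_left (hg i hi h) h⟩
  rw [div_sub' hW.ne', abs_div, abs_of_pos hW, div_lt_iff₀ hW, sum_mul, ← sum_sub_distrib]
  calc |∑ i ∈ s, (w i * g i - w i * c)|
      ≤ ∑ i ∈ s, |w i * g i - w i * c| := abs_sum_le_sum_abs _ _
    _ = ∑ i ∈ s, w i * |g i - c| := sum_congr rfl fun i hi => by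
        rw [← mul_sub, abs_mul, abs_of_nonneg (hw i hi)]
    _ < ∑ i ∈ s, w i * ε := sum_lt_sum hterm hterm_lt
    _ = ε * ∑ i ∈ s, w i := by rw [← sum_mul, mul_comm]

lemma interp_eq_div (a b : ℝ) (f : ℝ → ℝ) (n : ℕ) (x : ℝ) :
    interp a b f n x =
      (∑ l ∈ range (n + 1), hatA a b n l x * dy a b f n l * f (nodes a b n l)) /
        ∑ l ∈ range (n + 1), hatA a b n l x * dy a b f n l := by
  simp only [interp, phi, sum_div, div_mul_eq_mul_div]

lemma nodes_eq (a b : ℝ) (n l : ℕ) : nodes a b n l = a + l * ((b - a) / n) := by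
  rw [nodes, mul_div_assoc]

lemma nodes_mem_Icc {a b : ℝ} (hab : a ≤ b) {n l : ℕ} (hl : l ≤ n) :
    nodes a b n l ∈ Set.Icc a b := by
  have h1 : (l : ℝ) / n ≤ 1 := div_le_one_of_le₀ (by exact_mod_cast hl) n.cast_nonneg
  have h0 : 0 ≤ (l : ℝ) / n := by positivity
  rw [nodes, mul_div_right_comm]
  constructor <;> nlinarith

lemma nodes_strictMono {a b : ℝ} (hab : a < b) {n : ℕ} (hn : 0 < n) :
    StrictMono (nodes a b n) := fun l m hlm => by
  have hh : 0 < (b - a) / n := div_pos (sub_pos.mpr hab) (by exact_mod_cast hn)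
  rw [nodes_eq, nodes_eq]
  gcongr

lemma dy_pos {a b : ℝ} (hab : a < b) {f : ℝ → ℝ} (hmono : StrictMonoOn f (Set.Icc a b))
    {n l : ℕ} (hn : 0 < n) (hl : l ≤ n) : 0 < dy a b f n l := by
  have hmem : ∀ {k}, k ≤ n → nodes a b n k ∈ Set.Icc a b := nodes_mem_Icc hab.le
  unfold dy
  split_ifs with h0
  · exact sub_pos.mpr (hmono (hmem n.zero_le) (hmem hn) (nodes_strictMono hab hn one_pos))
  · exact sub_pos.mpr (hmono (hmem (l.sub_le 1 |>.trans hl)) (hmem hl)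
      (nodes_strictMono hab hn (by omega)))

lemma hatA_nonneg (a b : ℝ) (n l : ℕ) (x : ℝ) : 0 ≤ hatA a b n l x := le_max_left _ _

lemma hatA_pos_iff {a b : ℝ} (hab : a < b) {n : ℕ} (hn : 0 < n) (l : ℕ) (x : ℝ) :
    0 < hatA a b n l x ↔ |x - nodes a b n l| < (b - a) / n := by
  have hba : 0 < b - a := sub_pos.mpr hab
  have hn' : (0 : ℝ) < n := by exact_mod_cast hn
  rw [hatA, lt_max_iff, sub_pos, lt_div_iff₀ hn', div_mul_eq_mul_div, div_lt_one hba, mul_comm]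
  simp only [lt_irrefl, false_or]

lemma exists_abs_sub_nodes_lt {a b : ℝ} (hab : a < b) {n : ℕ} (hn : 0 < n) {x : ℝ}
    (hx : x ∈ Set.Icc a b) : ∃ l ≤ n, |x - nodes a b n l| < (b - a) / n := by
  set h := (b - a) / n
  have hh : 0 < h := div_pos (sub_pos.mpr hab) (by exact_mod_cast hn)
  set t := (x - a) / h
  have ht0 : 0 ≤ t := div_nonneg (sub_nonneg.mpr hx.1) hh.le
  have htn : t ≤ n := by
    rw [div_le_iff₀ hh, mul_div_cancel₀ _ (Nat.cast_ne_zero.mpr hn.ne')]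
    linarith [hx.2]
  have hxt : x - nodes a b n ⌊t⌋₊ = (t - ⌊t⌋₊) * h := by
    rw [nodes_eq, sub_mul, div_mul_cancel₀ _ hh.ne']; ring
  refine ⟨⌊t⌋₊, Nat.floor_le_of_le htn, ?_⟩
  rw [hxt, abs_of_nonneg (mul_nonneg (sub_nonneg.mpr (Nat.floor_le ht0)) hh.le)]
  have := Nat.lt_floor_add_one t
  nlinarith

/-- Theorem 3.1 of the paper, strictly monotone case. For continuous
strictly increasing `f` on `[a, b]`, the interpolation functions
`f_n(x) = Σ_l φ_l^{(n)}(x) y_l^{(n)}` converge uniformly to `f` on `[a, b]`. -/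
theorem stmt_8 (a b : ℝ) (hab : a < b) (f : ℝ → ℝ)
    (hf : ContinuousOn f (Set.Icc a b)) (hmono : StrictMonoOn f (Set.Icc a b)) :
    ∀ ε > 0, ∃ N : ℕ, ∀ n > N, ∀ x ∈ Set.Icc a b,
      |interp a b f n x - f x| < ε := by
  intro ε hε
  obtain ⟨δ, hδ, hfδ⟩ := Metric.uniformContinuousOn_iff.mp
    (isCompact_Icc.uniformContinuousOn_of_continuous hf) ε hε
  obtain ⟨N, hN⟩ := exists_nat_gt ((b - a) / δ)
  refine ⟨N, fun n hnN x hx => ?_⟩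
  have hn : 0 < n := N.zero_le.trans_lt hnN
  have hmesh : (b - a) / n < δ :=
    (div_lt_comm₀ hδ (by exact_mod_cast hn)).mp (hN.trans (by exact_mod_cast hnN))
  have hdy : ∀ l ∈ range (n + 1), 0 < dy a b f n l := fun l hl =>
    dy_pos hab hmono hn (Nat.lt_succ_iff.mp (mem_range.mp hl))
  rw [interp_eq_div]
  refine abs_sum_mul_div_sum_sub_lt _ _ _
    (fun l hl => mul_nonneg (hatA_nonneg a b n l x) (hdy l hl).le) ?_ fun l hl hw => ?_
  · obtain ⟨l, hl, hxl⟩ := exists_abs_sub_nodes_lt hab hn hx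
    exact ⟨l, mem_range.mpr (Nat.lt_succ_of_le hl),
      mul_pos ((hatA_pos_iff hab hn l x).mpr hxl) (hdy l (mem_range.mpr (Nat.lt_succ_of_le hl)))⟩
  · have hA := (hatA_pos_iff hab hn l x).mp ((mul_pos_iff_of_pos_right (hdy l hl)).mp hw)
    rw [abs_sub_comm] at hA
    exact hfδ _ (nodes_mem_Icc hab.le (Nat.lt_succ_iff.mp (mem_range.mp hl))) _ hx
      (hA.trans hmesh)
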